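/- arXiv:2511.03535 — 6 statements merged into one kernel-verified Lean document; each statement's English description precedes it below -/
import Mathlib

section
/- For all real numbers x and y, log(1+x²) + log(1+y²) ≥ (1/2)·log(1+(x+y)²). -/
theorem log_sum_sq_ineq (x y : ℝ) :
    Real.log (1 + x ^ 2) + Real.log (1 + y ^ 2) ≥
      (1 / 2) * Real.log (1 + (x + y) ^ 2) := by
  have hx : (0:ℝ) < 1 + x ^ 2 := by positivity
  have hy : (0:ℝ) < 1 + y ^ 2 := by positivity
  have hz : (0:ℝ) < 1 + (x + y) ^ 2 := by positivity
  have hAB : 1 + (x + y) ^ 2 ≤ ((1 + x ^ 2) * (1 + y ^ 2)) ^ 2 := by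
    nlinarith [sq_nonneg (x*y), sq_nonneg (x-y), sq_nonneg (x^2+y^2), sq_nonneg (x*y*(x+y))]
  have h2 := Real.log_le_log hz hAB
  rw [Real.log_pow, Real.log_mul (ne_of_gt hx) (ne_of_gt hy)] at h2
  push_cast at h2
  linarith
end

section
/- Let m > 1/2. For every t ∈ ℝ, ∫_ℝ (x−t)/((1+(x−t)²)(1+x²)^m) dx = ∫_0^∞ x/(1+x²) · (1/(1+(x+t)²)^m − 1/(1+(x−t)²)^m) dx, and this quantity is positive if t < 0, zero if t = 0, and negative if t > 0. -/
open MeasureTheory Set Real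

private lemma pb (x : ℝ) : (0:ℝ) < 1 + x ^ 2 := by positivity

private lemma rp (m x : ℝ) : (0:ℝ) < (1 + x ^ 2) ^ m := Real.rpow_pos_of_pos (pb x) m

private lemma cont_aux (m c : ℝ) :
    Continuous (fun x : ℝ => x / ((1 + x ^ 2) * (1 + (x + c) ^ 2) ^ m)) := by
  apply Continuous.div continuous_id
  · exact (continuous_const.add (continuous_pow 2)).mul
      ((continuous_const.add ((continuous_id.add continuous_const).pow 2)).rpow_const
        (fun x => Or.inl (ne_of_gt (pb _))))
  · intro x
    exact ne_of_gt (mul_pos (pb x) (rp m (x + c)))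

private lemma integrable_aux (m : ℝ) (hm : 1 / 2 < m) (c : ℝ) :
    Integrable (fun x : ℝ => x / ((1 + x ^ 2) * (1 + (x + c) ^ 2) ^ m)) := by
  have h1 : Integrable (fun x : ℝ => (1 + ‖x‖) ^ (-(2 * m))) :=
    integrable_one_add_norm (E := ℝ) (by simpa using by linarith)
  have hmajor : Integrable (fun x : ℝ => 1 / 2 * (2 ^ m * (1 + ‖x + c‖) ^ (-(2 * m)))) :=
    ((h1.comp_add_right c).const_mul _).const_mul _
  refine hmajor.mono' (cont_aux m c).aestronglyMeasurable (Filter.Eventually.of_forall fun x => ?_)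
  have h2 : |x| / (1 + x ^ 2) ≤ 1 / 2 := by
    rw [div_le_div_iff₀ (pb x) two_pos]
    nlinarith [sq_nonneg (|x| - 1), sq_abs x]
  have hb : (0:ℝ) < 1 + ‖x + c‖ := by positivity
  have hsq : (0:ℝ) < (1 + ‖x + c‖) ^ 2 / 2 := by positivity
  have hle : (1 + ‖x + c‖) ^ 2 / 2 ≤ 1 + (x + c) ^ 2 := by
    rw [Real.norm_eq_abs]
    nlinarith [sq_nonneg (|x + c| - 1), sq_abs (x + c)]
  have h3 : (1 + (x + c) ^ 2) ^ (-m) ≤ 2 ^ m * (1 + ‖x + c‖) ^ (-(2 * m)) := by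
    have := Real.rpow_le_rpow_of_nonpos hsq hle (by linarith : -m ≤ 0)
    calc (1 + (x + c) ^ 2) ^ (-m) ≤ ((1 + ‖x + c‖) ^ 2 / 2) ^ (-m) := this
      _ = 2 ^ m * (1 + ‖x + c‖) ^ (-(2 * m)) := by
          rw [Real.div_rpow (by positivity) (by norm_num), Real.rpow_neg (by norm_num : (0:ℝ) ≤ 2),
            div_eq_mul_inv, inv_inv, ← Real.rpow_natCast (1 + ‖x + c‖) 2, ← Real.rpow_mul hb.le]
          push_cast
          ring_nf
  calc ‖x / ((1 + x ^ 2) * (1 + (x + c) ^ 2) ^ m)‖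
      = |x| / (1 + x ^ 2) * (1 + (x + c) ^ 2) ^ (-m) := by
        rw [Real.norm_eq_abs, abs_div, abs_of_pos (mul_pos (pb x) (rp m (x + c))),
          Real.rpow_neg (pb (x + c)).le, ← div_eq_mul_inv, div_div]
    _ ≤ 1 / 2 * (2 ^ m * (1 + ‖x + c‖) ^ (-(2 * m))) :=
        mul_le_mul h2 h3 (Real.rpow_pos_of_pos (pb (x + c)) _).le (by norm_num)

private lemma alg_id (m t x : ℝ) :
    x / ((1 + x ^ 2) * (1 + (x + t) ^ 2) ^ m) - x / ((1 + x ^ 2) * (1 + (x - t) ^ 2) ^ m)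
      = x / (1 + x ^ 2) * (1 / (1 + (x + t) ^ 2) ^ m - 1 / (1 + (x - t) ^ 2) ^ m) := by
  have hA := (rp m (x + t)).ne'
  have hB := (rp m (x - t)).ne'
  have h0 := (pb x).ne'
  field_simp

private lemma integrableOn_phi (m : ℝ) (hm : 1 / 2 < m) (t : ℝ) :
    IntegrableOn (fun x : ℝ =>
      x / (1 + x ^ 2) * (1 / (1 + (x + t) ^ 2) ^ m - 1 / (1 + (x - t) ^ 2) ^ m)) (Set.Ioi 0) := by
  have h4 : IntegrableOn (fun x : ℝ => x / ((1 + x ^ 2) * (1 + (x - t) ^ 2) ^ m)) (Set.Ioi 0) := by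
    have := (integrable_aux m hm (-t)).integrableOn (s := Set.Ioi 0)
    simpa [sub_eq_add_neg] using this
  exact MeasureTheory.IntegrableOn.congr_fun ((integrable_aux m hm t).integrableOn.sub h4)
    (fun x _ => alg_id m t x) measurableSet_Ioi

private lemma phi_pos (m : ℝ) (hm : 1 / 2 < m) {t x : ℝ} (ht : t < 0) (hx : 0 < x) :
    0 < x / (1 + x ^ 2) * (1 / (1 + (x + t) ^ 2) ^ m - 1 / (1 + (x - t) ^ 2) ^ m) := by
  have h1 : (0:ℝ) < x / (1 + x ^ 2) := div_pos hx (pb x)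
  have hbase : 1 + (x + t) ^ 2 < 1 + (x - t) ^ 2 := by nlinarith
  have h2 : (1 + (x + t) ^ 2) ^ m < (1 + (x - t) ^ 2) ^ m :=
    Real.rpow_lt_rpow (pb (x + t)).le hbase (by linarith)
  have h3 : 1 / (1 + (x - t) ^ 2) ^ m < 1 / (1 + (x + t) ^ 2) ^ m :=
    one_div_lt_one_div_of_lt (rp m (x + t)) h2
  exact mul_pos h1 (sub_pos.mpr h3)

private lemma sgn_pos_aux (m : ℝ) (hm : 1 / 2 < m) {t : ℝ} (ht : t < 0) :
    0 < ∫ x in Set.Ioi (0:ℝ),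
      x / (1 + x ^ 2) * (1 / (1 + (x + t) ^ 2) ^ m - 1 / (1 + (x - t) ^ 2) ^ m) := by
  set φ := fun x : ℝ =>
    x / (1 + x ^ 2) * (1 / (1 + (x + t) ^ 2) ^ m - 1 / (1 + (x - t) ^ 2) ^ m) with hφ
  have h_nonneg : 0 ≤ᵐ[volume.restrict (Set.Ioi (0:ℝ))] φ :=
    (ae_restrict_iff' measurableSet_Ioi).mpr
      (Filter.Eventually.of_forall fun x hx => (phi_pos m hm ht hx).le)
  rw [setIntegral_pos_iff_support_of_nonneg_ae h_nonneg (integrableOn_phi m hm t)]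
  have hsub : Set.Ioi (0:ℝ) ⊆ Function.support φ ∩ Set.Ioi 0 :=
    fun x hx => ⟨(phi_pos m hm ht hx).ne', hx⟩
  calc (0:ENNReal) < volume (Set.Ioi (0:ℝ)) := by simp [Real.volume_Ioi]
    _ ≤ _ := measure_mono hsub

private lemma main_eq (m : ℝ) (hm : 1 / 2 < m) (t : ℝ) :
    (∫ x : ℝ, (x - t) / ((1 + (x - t) ^ 2) * (1 + x ^ 2) ^ m)) =
      ∫ x in Set.Ioi (0:ℝ),
        x / (1 + x ^ 2) * (1 / (1 + (x + t) ^ 2) ^ m - 1 / (1 + (x - t) ^ 2) ^ m) := by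
  have hg := integrable_aux m hm t
  have h4 : IntegrableOn (fun x : ℝ => x / ((1 + x ^ 2) * (1 + (x - t) ^ 2) ^ m)) (Set.Ioi 0) := by
    have := (integrable_aux m hm (-t)).integrableOn (s := Set.Ioi 0)
    simpa [sub_eq_add_neg] using this
  have h1 : (∫ x : ℝ, (x - t) / ((1 + (x - t) ^ 2) * (1 + x ^ 2) ^ m))
      = ∫ x : ℝ, x / ((1 + x ^ 2) * (1 + (x + t) ^ 2) ^ m) := by
    rw [← integral_add_right_eq_self (μ := volume)
      (fun x => (x - t) / ((1 + (x - t) ^ 2) * (1 + x ^ 2) ^ m)) t]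
    simp only [add_sub_cancel_right]
  have h2 := (intervalIntegral.integral_Iic_add_Ioi (b := (0:ℝ)) hg.integrableOn hg.integrableOn).symm
  have h3 : (∫ x in Set.Iic (0:ℝ), x / ((1 + x ^ 2) * (1 + (x + t) ^ 2) ^ m))
      = ∫ x in Set.Ioi (0:ℝ), -(x / ((1 + x ^ 2) * (1 + (x - t) ^ 2) ^ m)) := by
    have key := integral_comp_neg_Iic (0:ℝ)
      (fun x => -(x / ((1 + x ^ 2) * (1 + (x - t) ^ 2) ^ m)))
    rw [neg_zero] at key
    rw [← key]
    congr 1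
    funext x
    rw [show ((-x) - t) ^ 2 = (x + t) ^ 2 from by ring,
      show ((-x):ℝ) ^ 2 = x ^ 2 from by ring, neg_div, neg_neg]
  rw [h1, h2, h3, integral_neg, neg_add_eq_sub, ← integral_sub hg.integrableOn h4]
  exact setIntegral_congr_fun measurableSet_Ioi fun x _ => alg_id m t x

theorem pearson_score_integral_sign (m : ℝ) (hm : 1 / 2 < m) (t : ℝ) :
    (∫ x : ℝ, (x - t) / ((1 + (x - t) ^ 2) * (1 + x ^ 2) ^ m)) =
      (∫ x in Set.Ioi (0 : ℝ),
        x / (1 + x ^ 2) *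
          (1 / (1 + (x + t) ^ 2) ^ m - 1 / (1 + (x - t) ^ 2) ^ m)) ∧
    (t < 0 → 0 < ∫ x : ℝ, (x - t) / ((1 + (x - t) ^ 2) * (1 + x ^ 2) ^ m)) ∧
    (t = 0 → (∫ x : ℝ, (x - t) / ((1 + (x - t) ^ 2) * (1 + x ^ 2) ^ m)) = 0) ∧
    (0 < t → (∫ x : ℝ, (x - t) / ((1 + (x - t) ^ 2) * (1 + x ^ 2) ^ m)) < 0) := by
  refine ⟨main_eq m hm t, fun ht => ?_, fun ht => ?_, fun ht => ?_⟩
  · rw [main_eq m hm t]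
    exact sgn_pos_aux m hm ht
  · rw [main_eq m hm t, ht]
    simp
  · rw [main_eq m hm t]
    have hneg : ∀ x : ℝ, x / (1 + x ^ 2) * (1 / (1 + (x + t) ^ 2) ^ m - 1 / (1 + (x - t) ^ 2) ^ m)
        = -(x / (1 + x ^ 2) *
            (1 / (1 + (x + -t) ^ 2) ^ m - 1 / (1 + (x - -t) ^ 2) ^ m)) := fun x => by
      rw [sub_neg_eq_add, show x + -t = x - t from by ring]
      ring
    have heq : (∫ x in Set.Ioi (0:ℝ),
          x / (1 + x ^ 2) * (1 / (1 + (x + t) ^ 2) ^ m - 1 / (1 + (x - t) ^ 2) ^ m))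
        = -∫ x in Set.Ioi (0:ℝ),
            x / (1 + x ^ 2) * (1 / (1 + (x + -t) ^ 2) ^ m - 1 / (1 + (x - -t) ^ 2) ^ m) := by
      rw [← integral_neg]
      exact setIntegral_congr_fun measurableSet_Ioi fun x _ => hneg x
    rw [heq]
    have := sgn_pos_aux m hm (t := -t) (by linarith)
    linarith
end

section
/- Let m > 1/2 and let F_m(t) = ∫_ℝ log(1+(x−t)²) c_m (1+x²)^{−m} dx with c_m the normalizing constant of the Pearson Type VII density. Then F_m is strictly decreasing on (−∞,0) and strictly increasing on (0,∞); in particular F_m attains its minimum over ℝ uniquely at t = 0. -/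
open MeasureTheory

noncomputable def pearsonC (m : ℝ) : ℝ := (∫ x : ℝ, (1 + x ^ 2) ^ (-m))⁻¹

noncomputable def pearsonF (m : ℝ) (t : ℝ) : ℝ :=
  ∫ x : ℝ, Real.log (1 + (x - t) ^ 2) * (pearsonC m * (1 + x ^ 2) ^ (-m))

namespace PearsonAux

open Real Set Metric

/-- positivity of the density kernel -/
lemma p_pos (m x : ℝ) : 0 < (1 + x ^ 2) ^ (-m) := by positivity

lemma base_pos (x : ℝ) : (0:ℝ) < 1 + x ^ 2 := by positivity

lemma p_cont (m : ℝ) : Continuous fun x : ℝ => (1 + x ^ 2) ^ (-m) := by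
  apply Continuous.rpow_const (by continuity)
  intro x
  exact Or.inl (ne_of_gt (base_pos x))

lemma p_int {m : ℝ} (hm : 1 / 2 < m) : Integrable fun x : ℝ => (1 + x ^ 2) ^ (-m) := by
  have h := integrable_rpow_neg_one_add_norm_sq (E := ℝ) (μ := volume) (r := 2 * m)
    (by simp; linarith)
  have e : -(2 * m) / 2 = -m := by ring
  simpa [Real.norm_eq_abs, sq_abs, e] using h

lemma log_arg_cont (t : ℝ) : Continuous fun x : ℝ => Real.log (1 + (x - t) ^ 2) := by
  apply Continuous.log (by continuity)
  intro x
  have : (0:ℝ) < 1 + (x - t) ^ 2 := by positivity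
  exact ne_of_gt this

lemma log_le (t x : ℝ) :
    Real.log (1 + (x - t) ^ 2) ≤ Real.log 2 + Real.log (1 + t ^ 2) + Real.log (1 + x ^ 2) := by
  have h1 : (1:ℝ) + (x - t) ^ 2 ≤ 2 * (1 + t ^ 2) * (1 + x ^ 2) := by nlinarith [sq_nonneg (x + t), sq_nonneg (x * t), sq_nonneg (1 - x * t)]
  have h2 : Real.log (1 + (x - t) ^ 2) ≤ Real.log (2 * (1 + t ^ 2) * (1 + x ^ 2)) :=
    Real.log_le_log (by positivity) h1
  have h3 : Real.log (2 * (1 + t ^ 2) * (1 + x ^ 2))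
      = Real.log 2 + Real.log (1 + t ^ 2) + Real.log (1 + x ^ 2) := by
    rw [Real.log_mul (by positivity) (by positivity), Real.log_mul (by positivity) (by positivity)]
  linarith

lemma log_le_rpow {y ε : ℝ} (hy : 1 ≤ y) (hε : 0 < ε) : Real.log y ≤ (1 / ε) * y ^ ε := by
  have hy0 : (0:ℝ) < y := lt_of_lt_of_le one_pos hy
  have h1 : Real.log (y ^ ε) = ε * Real.log y := Real.log_rpow hy0 ε
  have h2 : Real.log (y ^ ε) ≤ y ^ ε - 1 := Real.log_le_sub_one_of_pos (Real.rpow_pos_of_pos hy0 ε)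
  have h3 : ε * Real.log y ≤ y ^ ε := by linarith
  rw [div_mul_eq_mul_div, le_div_iff₀ hε, mul_comm]
  linarith

lemma log_nonneg' (t x : ℝ) : 0 ≤ Real.log (1 + (x - t) ^ 2) :=
  Real.log_nonneg (by nlinarith [sq_nonneg (x - t)])

/-- integrability of the integrand of `pearsonF` -/
lemma F_int {m : ℝ} (hm : 1 / 2 < m) (c t : ℝ) :
    Integrable fun x : ℝ => Real.log (1 + (x - t) ^ 2) * (c * (1 + x ^ 2) ^ (-m)) := by
  set ε : ℝ := (2 * m - 1) / 4 with hεdef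
  have hε : 0 < ε := by rw [hεdef]; linarith
  have hm' : 1 / 2 < m - ε := by rw [hεdef]; linarith
  have hbound_int : Integrable fun x : ℝ =>
      (Real.log 2 + Real.log (1 + t ^ 2)) * |c| * (1 + x ^ 2) ^ (-m)
      + (|c| / ε) * (1 + x ^ 2) ^ (-(m - ε)) :=
    ((p_int hm).const_mul _).add ((p_int hm').const_mul _)
  refine hbound_int.mono' ?_ (Filter.Eventually.of_forall fun x => ?_)
  · exact (((log_arg_cont t).mul (continuous_const.mul (p_cont m))).aestronglyMeasurable)
  · have hp := p_pos m x
    have hlog := log_nonneg' t x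
    have h1 : ‖Real.log (1 + (x - t) ^ 2) * (c * (1 + x ^ 2) ^ (-m))‖
        = Real.log (1 + (x - t) ^ 2) * (|c| * (1 + x ^ 2) ^ (-m)) := by
      rw [norm_mul, Real.norm_eq_abs, Real.norm_eq_abs, abs_of_nonneg hlog, abs_mul,
        abs_of_nonneg hp.le]
    rw [h1]
    have h2 : Real.log (1 + x ^ 2) ≤ (1 / ε) * (1 + x ^ 2) ^ ε :=
      log_le_rpow (by nlinarith [sq_nonneg x]) hε
    have h3 : Real.log (1 + (x - t) ^ 2)
        ≤ Real.log 2 + Real.log (1 + t ^ 2) + (1 / ε) * (1 + x ^ 2) ^ ε := by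
      have := log_le t x; linarith
    have h4 : (1 + x ^ 2) ^ ε * (1 + x ^ 2) ^ (-m) = (1 + x ^ 2) ^ (-(m - ε)) := by
      rw [← Real.rpow_add (base_pos x)]; ring_nf
    have h5 : Real.log (1 + (x - t) ^ 2) * (|c| * (1 + x ^ 2) ^ (-m))
        ≤ (Real.log 2 + Real.log (1 + t ^ 2) + (1 / ε) * (1 + x ^ 2) ^ ε)
          * (|c| * (1 + x ^ 2) ^ (-m)) := by
      apply mul_le_mul_of_nonneg_right h3 (by positivity)
    calc Real.log (1 + (x - t) ^ 2) * (|c| * (1 + x ^ 2) ^ (-m))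
        ≤ (Real.log 2 + Real.log (1 + t ^ 2) + (1 / ε) * (1 + x ^ 2) ^ ε)
          * (|c| * (1 + x ^ 2) ^ (-m)) := h5
      _ = (Real.log 2 + Real.log (1 + t ^ 2)) * |c| * (1 + x ^ 2) ^ (-m)
          + (|c| / ε) * ((1 + x ^ 2) ^ ε * (1 + x ^ 2) ^ (-m)) := by ring
      _ = (Real.log 2 + Real.log (1 + t ^ 2)) * |c| * (1 + x ^ 2) ^ (-m)
          + (|c| / ε) * (1 + x ^ 2) ^ (-(m - ε)) := by rw [h4]

/-- the derivative integrand -/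
noncomputable def q (m c t x : ℝ) : ℝ :=
  2 * (t - x) / (1 + (x - t) ^ 2) * (c * (1 + x ^ 2) ^ (-m))

lemma q_cont (m c t : ℝ) : Continuous (q m c t) := by
  unfold q
  apply Continuous.mul _ (continuous_const.mul (p_cont m))
  apply Continuous.div (by continuity) (by continuity)
  intro x
  have : (0:ℝ) < 1 + (x - t) ^ 2 := by positivity
  exact ne_of_gt this

lemma ratio_abs_le (t x : ℝ) : |2 * (t - x) / (1 + (x - t) ^ 2)| ≤ 1 := by
  rw [abs_div, abs_of_pos (show (0:ℝ) < 1 + (x - t) ^ 2 by positivity),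
    div_le_one (by positivity)]
  have h : |2 * (t - x)| = 2 * |x - t| := by
    rw [abs_mul, abs_two, abs_sub_comm]
  rw [h]
  nlinarith [sq_abs (x - t), sq_nonneg (|x - t| - 1)]

lemma q_abs_le (m c t x : ℝ) : ‖q m c t x‖ ≤ |c| * (1 + x ^ 2) ^ (-m) := by
  unfold q
  rw [Real.norm_eq_abs, abs_mul, abs_mul, abs_of_nonneg (p_pos m x).le]
  have h := ratio_abs_le t x
  have hp := p_pos m x
  nlinarith [abs_nonneg c, abs_nonneg (2 * (t - x) / (1 + (x - t) ^ 2)),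
    mul_nonneg (abs_nonneg c) hp.le]

lemma q_int {m : ℝ} (hm : 1 / 2 < m) (c t : ℝ) : Integrable (q m c t) := by
  refine ((p_int hm).const_mul |c|).mono' (q_cont m c t).aestronglyMeasurable
    (Filter.Eventually.of_forall fun x => ?_)
  exact q_abs_le m c t x

/-- pointwise derivative in `t` -/
lemma hasDerivAt_integrand (m c x t₀ : ℝ) :
    HasDerivAt (fun t => Real.log (1 + (x - t) ^ 2) * (c * (1 + x ^ 2) ^ (-m)))
      (q m c t₀ x) t₀ := by
  have h1 : HasDerivAt (fun t : ℝ => x - t) (-1) t₀ := (hasDerivAt_id t₀).const_sub x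
  have h2 := h1.fun_pow 2
  have h3 := h2.const_add 1
  have h4 : (0:ℝ) < 1 + (x - t₀) ^ 2 := by positivity
  have h5 := h3.log (ne_of_gt h4)
  have h6 : HasDerivAt (fun t => Real.log (1 + (x - t) ^ 2) * (c * (1 + x ^ 2) ^ (-m))) _ t₀ :=
    h5.mul_const (c * (1 + x ^ 2) ^ (-m))
  convert h6 using 1
  unfold q
  field_simp
  ring

/-- derivative of `pearsonF` -/
lemma hasDerivAt_F {m : ℝ} (hm : 1 / 2 < m) (t₀ : ℝ) :
    HasDerivAt (pearsonF m) (∫ x : ℝ, q m (pearsonC m) t₀ x) t₀ := by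
  set c := pearsonC m
  have key := hasDerivAt_integral_of_dominated_loc_of_lip
    (F := fun t x => Real.log (1 + (x - t) ^ 2) * (c * (1 + x ^ 2) ^ (-m)))
    (F' := fun x => q m c t₀ x)
    (bound := fun x => |c| * (1 + x ^ 2) ^ (-m))
    (x₀ := t₀) (s := ball t₀ 1) (ball_mem_nhds t₀ one_pos)
    (Filter.Eventually.of_forall fun t =>
      (((log_arg_cont t).mul (continuous_const.mul (p_cont m))).aestronglyMeasurable))
    (F_int hm c t₀)
    ((q_cont m c t₀).aestronglyMeasurable)
    (Filter.Eventually.of_forall fun x => ?_)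
    ((p_int hm).const_mul |c|)
    (Filter.Eventually.of_forall fun x => (hasDerivAt_integrand m c x t₀))
  · exact key.2
  · -- Lipschitz bound on the ball
    apply Convex.lipschitzOnWith_of_nnnorm_hasDerivWithin_le (convex_ball t₀ 1)
      (f' := fun t => q m c t x)
      (fun t _ => (hasDerivAt_integrand m c x t).hasDerivWithinAt)
    intro t _
    have h := q_abs_le m c t x
    have hb : 0 ≤ |c| * (1 + x ^ 2) ^ (-m) := by positivity
    rw [← NNReal.coe_le_coe]
    simpa [Real.coe_nnabs, abs_mul, abs_abs, abs_of_nonneg (PearsonAux.p_pos m x).le] using h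

lemma c_pos {m : ℝ} (hm : 1 / 2 < m) : 0 < pearsonC m := by
  unfold pearsonC
  apply inv_pos.mpr
  rw [integral_pos_iff_support_of_nonneg (fun x => (p_pos m x).le) (p_int hm)]
  have : Function.support (fun x : ℝ => (1 + x ^ 2) ^ (-m)) = Set.univ := by
    ext x; simp [Function.mem_support, ne_of_gt (p_pos m x)]
  rw [this]
  simp

/-- positivity of the derivative for positive `t` -/
lemma deriv_pos {m : ℝ} (hm : 1 / 2 < m) {t : ℝ} (ht : 0 < t) :
    0 < ∫ x : ℝ, q m (pearsonC m) t x := by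
  set c := pearsonC m with hc
  have hcpos : 0 < c := c_pos hm
  have hqi : Integrable (q m c t) := q_int hm c t
  have hqi' : Integrable fun x => q m c t (2 * t - x) := by
    have h1 : Integrable fun x => q m c t (2 * t + x) := hqi.comp_add_left (2 * t)
    have := h1.comp_neg
    simpa [sub_eq_add_neg] using this
  have hrefl : (∫ x : ℝ, q m c t (2 * t - x)) = ∫ x : ℝ, q m c t x := by
    have h1 : (∫ x : ℝ, q m c t (2 * t + x)) = ∫ x : ℝ, q m c t x :=
      integral_add_left_eq_self (q m c t) (2 * t)
    have h2 : (∫ x : ℝ, q m c t (2 * t + -x)) = ∫ x : ℝ, q m c t (2 * t + x) :=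
      integral_neg_eq_self (fun x => q m c t (2 * t + x)) volume
    simp only [sub_eq_add_neg]
    rw [h2, h1]
  -- the symmetrized integrand
  set s : ℝ → ℝ := fun x => q m c t x + q m c t (2 * t - x) with hs
  have hs_eq : ∀ x, s x
      = 2 * (t - x) / (1 + (x - t) ^ 2) * c * ((1 + x ^ 2) ^ (-m) - (1 + (2 * t - x) ^ 2) ^ (-m)) := by
    intro x
    simp only [hs, q]
    have e1 : 1 + (2 * t - x - t) ^ 2 = 1 + (x - t) ^ 2 := by ring
    have e2 : 2 * (t - (2 * t - x)) = -(2 * (t - x)) := by ring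
    rw [e1, e2]
    field_simp
    ring
  have hs_nonneg : ∀ x, 0 ≤ s x := by
    intro x
    rw [hs_eq x]
    rcases lt_trichotomy x t with hx | hx | hx
    · have hlt : 1 + x ^ 2 < 1 + (2 * t - x) ^ 2 := by nlinarith
      have hrp : (1 + (2 * t - x) ^ 2) ^ (-m) < (1 + x ^ 2) ^ (-m) :=
        Real.rpow_lt_rpow_of_neg (base_pos x) hlt (by linarith)
      have h1 : 0 < 2 * (t - x) / (1 + (x - t) ^ 2) := by
        apply div_pos (by linarith) (by positivity)
      have h2 : 0 < (1 + x ^ 2) ^ (-m) - (1 + (2 * t - x) ^ 2) ^ (-m) := by linarith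
      have := mul_pos (mul_pos h1 hcpos) h2
      linarith
    · subst hx; simp
    · have hlt : 1 + (2 * t - x) ^ 2 < 1 + x ^ 2 := by nlinarith
      have hrp : (1 + x ^ 2) ^ (-m) < (1 + (2 * t - x) ^ 2) ^ (-m) :=
        Real.rpow_lt_rpow_of_neg (by positivity) hlt (by linarith)
      have h1 : 2 * (t - x) / (1 + (x - t) ^ 2) < 0 := by
        apply div_neg_of_neg_of_pos (by linarith) (by positivity)
      have h2 : (1 + x ^ 2) ^ (-m) - (1 + (2 * t - x) ^ 2) ^ (-m) < 0 := by linarith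
      have := mul_pos_of_neg_of_neg (mul_neg_of_neg_of_pos h1 hcpos) h2
      linarith
  have hs_pos : ∀ x, t < x → 0 < s x := by
    intro x hx
    rw [hs_eq x]
    have hlt : 1 + (2 * t - x) ^ 2 < 1 + x ^ 2 := by nlinarith
    have hrp : (1 + x ^ 2) ^ (-m) < (1 + (2 * t - x) ^ 2) ^ (-m) :=
      Real.rpow_lt_rpow_of_neg (by positivity) hlt (by linarith)
    have h1 : 2 * (t - x) / (1 + (x - t) ^ 2) < 0 := by
      apply div_neg_of_neg_of_pos (by linarith) (by positivity)
    have h2 : (1 + x ^ 2) ^ (-m) - (1 + (2 * t - x) ^ 2) ^ (-m) < 0 := by linarith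
    have := mul_pos_of_neg_of_neg (mul_neg_of_neg_of_pos h1 hcpos) h2
    linarith
  have hs_int : Integrable s := hqi.add hqi'
  have hs_integral : (∫ x : ℝ, s x) = 2 * ∫ x : ℝ, q m c t x := by
    rw [hs]
    rw [integral_add hqi hqi', hrefl]
    ring
  have hpos : 0 < ∫ x : ℝ, s x := by
    rw [integral_pos_iff_support_of_nonneg hs_nonneg hs_int]
    have hsub : Set.Ioi t ⊆ Function.support s := fun x hx => ne_of_gt (hs_pos x hx)
    calc (0:ENNReal) < volume (Set.Ioi t) := by simp [Real.volume_Ioi]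
      _ ≤ volume (Function.support s) := measure_mono hsub
  linarith [hs_integral ▸ hpos]

lemma F_even (m t : ℝ) : pearsonF m (-t) = pearsonF m t := by
  unfold pearsonF
  have h : (∫ x : ℝ, Real.log (1 + (x - t) ^ 2) * (pearsonC m * (1 + x ^ 2) ^ (-m)))
      = ∫ x : ℝ, (fun y : ℝ => Real.log (1 + (y - -t) ^ 2) * (pearsonC m * (1 + y ^ 2) ^ (-m))) (-x) := by
    apply integral_congr_ae
    apply Filter.Eventually.of_forall
    intro x
    simp only
    have e1 : 1 + (-x - -t) ^ 2 = 1 + (x - t) ^ 2 := by ring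
    have e2 : 1 + (-x) ^ 2 = 1 + x ^ 2 := by ring
    rw [e1, e2]
  rw [h]
  exact (integral_neg_eq_self (fun y : ℝ => Real.log (1 + (y - -t) ^ 2) * (pearsonC m * (1 + y ^ 2) ^ (-m))) volume).symm

end PearsonAux

theorem pearsonF_strict_monotone (m : ℝ) (hm : 1 / 2 < m) :
    StrictAntiOn (pearsonF m) (Set.Iic 0) ∧
    StrictMonoOn (pearsonF m) (Set.Ici 0) ∧
    ∀ t : ℝ, t ≠ 0 → pearsonF m 0 < pearsonF m t := by
  have hderiv := PearsonAux.hasDerivAt_F hm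
  have hcont : Continuous (pearsonF m) := by
    rw [continuous_iff_continuousAt]
    exact fun t => (hderiv t).continuousAt
  have hmono : StrictMonoOn (pearsonF m) (Set.Ici 0) := by
    apply strictMonoOn_of_deriv_pos (convex_Ici 0) hcont.continuousOn
    intro t ht
    rw [interior_Ici] at ht
    rw [(hderiv t).deriv]
    exact PearsonAux.deriv_pos hm ht
  have hanti : StrictAntiOn (pearsonF m) (Set.Iic 0) := by
    intro s hs t ht hst
    have h1 : (0:ℝ) ≤ -t := by simpa using ht
    have h2 : -t < -s := by linarith
    have := hmono (Set.mem_Ici.mpr h1) (Set.mem_Ici.mpr (le_of_lt (lt_of_le_of_lt h1 h2))) h2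
    rwa [PearsonAux.F_even m t, PearsonAux.F_even m s] at this
  refine ⟨hanti, hmono, fun t ht => ?_⟩
  rcases lt_or_gt_of_ne ht with h | h
  · exact hanti (Set.mem_Iic.mpr (le_of_lt h)) Set.self_mem_Iic h
  · exact hmono Set.self_mem_Ici (Set.mem_Ici.mpr (le_of_lt h)) h
end

section
/- Let m > 1/2 and F_m(t) = ∫_ℝ log(1+(x−t)²) c_m(1+x²)^{−m} dx. Then F_m(t) − log(1+t²) → 0 as t → ∞; in particular exp(F_m(t))/t² → 1 as t → ∞. -/
open MeasureTheory Filter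

lemma key_ineq (x t : ℝ) : 1 + (x - t) ^ 2 ≤ 2 * (1 + x ^ 2) * (1 + t ^ 2) := by
  nlinarith [sq_nonneg (x + t), sq_nonneg (x - t), sq_nonneg (x * t), sq_nonneg x, sq_nonneg t]

lemma log_diff_bound (x t : ℝ) :
    |Real.log (1 + (x - t) ^ 2) - Real.log (1 + t ^ 2)| ≤ Real.log (2 * (1 + x ^ 2)) := by
  have h1 : (0:ℝ) < 1 + (x - t) ^ 2 := by positivity
  have h2 : (0:ℝ) < 1 + t ^ 2 := by positivity
  rw [abs_sub_le_iff]
  constructor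
  · have h := Real.log_le_log h1 (key_ineq x t)
    rw [Real.log_mul (by positivity) (by positivity)] at h
    linarith
  · have h4 := key_ineq x (x - t)
    rw [sub_sub_cancel] at h4
    have h := Real.log_le_log h2 h4
    rw [Real.log_mul (by positivity) (by positivity)] at h
    linarith

lemma integrable_one_add_sq_rpow {p : ℝ} (hp : 1 / 2 < p) :
    Integrable (fun x : ℝ => (1 + x ^ 2) ^ (-p)) := by
  have h := integrable_rpow_neg_one_add_norm_sq (E := ℝ) (μ := volume) (r := 2 * p)
    (by simp only [Module.finrank_self, Nat.cast_one]; linarith)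
  have heq : ∀ x : ℝ, ((1:ℝ) + ‖x‖ ^ 2) ^ (-(2 * p) / 2) = (1 + x ^ 2) ^ (-p) := by
    intro x
    rw [Real.norm_eq_abs, sq_abs]
    congr 1
    ring
  simpa only [heq] using h

lemma integrable_log_mul {m : ℝ} (hm : 1 / 2 < m) :
    Integrable (fun x : ℝ => Real.log (2 * (1 + x ^ 2)) * (1 + x ^ 2) ^ (-m)) := by
  set ε : ℝ := (m - 1 / 2) / 2 with hεdef
  have hε0 : 0 < ε := by rw [hεdef]; linarith
  have hint : Integrable (fun x : ℝ => (1 + x ^ 2) ^ (-(m - ε))) :=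
    integrable_one_add_sq_rpow (by rw [hεdef]; linarith)
  refine (hint.const_mul ((2:ℝ) ^ ε / ε)).mono' ?_ (Filter.Eventually.of_forall fun x => ?_)
  · apply Measurable.aestronglyMeasurable
    exact (Real.measurable_log.comp (by fun_prop)).mul (by fun_prop)
  · have hx : (0:ℝ) < 1 + x ^ 2 := by positivity
    have hlog0 : 0 ≤ Real.log (2 * (1 + x ^ 2)) := Real.log_nonneg (by nlinarith)
    have hrp : (0:ℝ) < (1 + x ^ 2) ^ (-m) := Real.rpow_pos_of_pos hx _
    rw [Real.norm_eq_abs, abs_of_nonneg (mul_nonneg hlog0 hrp.le)]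
    have hlog : Real.log (2 * (1 + x ^ 2)) ≤ (2 * (1 + x ^ 2)) ^ ε / ε :=
      Real.log_le_rpow_div (by positivity) hε0
    have hsplit : (2 * (1 + x ^ 2)) ^ ε = 2 ^ ε * (1 + x ^ 2) ^ ε :=
      Real.mul_rpow (by norm_num) hx.le
    calc Real.log (2 * (1 + x ^ 2)) * (1 + x ^ 2) ^ (-m)
        ≤ (2 * (1 + x ^ 2)) ^ ε / ε * (1 + x ^ 2) ^ (-m) :=
          mul_le_mul_of_nonneg_right hlog hrp.le
      _ = 2 ^ ε / ε * ((1 + x ^ 2) ^ ε * (1 + x ^ 2) ^ (-m)) := by rw [hsplit]; ring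
      _ = 2 ^ ε / ε * (1 + x ^ 2) ^ (-(m - ε)) := by
          rw [← Real.rpow_add hx]
          congr 1
          ring_nf

lemma integrable_log_shift {m : ℝ} (hm : 1 / 2 < m) (t : ℝ) :
    Integrable (fun x : ℝ => Real.log (1 + (x - t) ^ 2) * (1 + x ^ 2) ^ (-m)) := by
  refine (((integrable_one_add_sq_rpow hm).const_mul (Real.log (1 + t ^ 2))).add
    (integrable_log_mul hm)).mono' ?_ (Filter.Eventually.of_forall fun x => ?_)
  · apply Measurable.aestronglyMeasurable
    exact (Real.measurable_log.comp (by fun_prop)).mul (by fun_prop)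
  · have hx : (0:ℝ) < 1 + x ^ 2 := by positivity
    have hrp : (0:ℝ) < (1 + x ^ 2) ^ (-m) := Real.rpow_pos_of_pos hx _
    have hlog0 : 0 ≤ Real.log (1 + (x - t) ^ 2) := Real.log_nonneg (by nlinarith [sq_nonneg (x - t)])
    rw [Real.norm_eq_abs, abs_of_nonneg (mul_nonneg hlog0 hrp.le)]
    simp only [Pi.add_apply]
    have hb := (abs_sub_le_iff.mp (log_diff_bound x t)).1
    have : Real.log (1 + (x - t) ^ 2) ≤ Real.log (1 + t ^ 2) + Real.log (2 * (1 + x ^ 2)) := by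
      linarith
    nlinarith [mul_le_mul_of_nonneg_right this hrp.le]

theorem pearsonF_asymptotics (m : ℝ) (hm : 1 / 2 < m) :
    Tendsto (fun t : ℝ => pearsonF m t - Real.log (1 + t ^ 2)) atTop (nhds 0) ∧
    Tendsto (fun t : ℝ => Real.exp (pearsonF m t) / t ^ 2) atTop (nhds 1) := by
  have hg : Integrable (fun x : ℝ => (1 + x ^ 2) ^ (-m)) := integrable_one_add_sq_rpow hm
  have hgpos : ∀ x : ℝ, (0:ℝ) < (1 + x ^ 2) ^ (-m) :=
    fun x => Real.rpow_pos_of_pos (by positivity) _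
  have hIpos : 0 < ∫ x : ℝ, (1 + x ^ 2) ^ (-m) := by
    rw [integral_pos_iff_support_of_nonneg (fun x => (hgpos x).le) hg]
    have hs : Function.support (fun x : ℝ => (1 + x ^ 2) ^ (-m)) = Set.univ :=
      Set.eq_univ_of_forall fun x => (hgpos x).ne'
    rw [hs]
    simp
  have hcpos : 0 < pearsonC m := inv_pos.mpr hIpos
  have hcg : ∫ x : ℝ, pearsonC m * (1 + x ^ 2) ^ (-m) = 1 := by
    rw [integral_const_mul, pearsonC, inv_mul_cancel₀ hIpos.ne']
  -- the shifted integrands with constant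
  have hA : ∀ t : ℝ, Integrable
      (fun x : ℝ => Real.log (1 + (x - t) ^ 2) * (pearsonC m * (1 + x ^ 2) ^ (-m))) := by
    intro t
    have h := (integrable_log_shift hm t).const_mul (pearsonC m)
    simpa [mul_comm, mul_left_comm, mul_assoc] using h
  have hB : ∀ t : ℝ, Integrable
      (fun x : ℝ => Real.log (1 + t ^ 2) * (pearsonC m * (1 + x ^ 2) ^ (-m))) :=
    fun t => (hg.const_mul (pearsonC m)).const_mul _
  have heq : ∀ t : ℝ, pearsonF m t - Real.log (1 + t ^ 2)
      = ∫ x : ℝ, (Real.log (1 + (x - t) ^ 2) - Real.log (1 + t ^ 2))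
          * (pearsonC m * (1 + x ^ 2) ^ (-m)) := by
    intro t
    have hsplit : (fun x : ℝ => (Real.log (1 + (x - t) ^ 2) - Real.log (1 + t ^ 2))
          * (pearsonC m * (1 + x ^ 2) ^ (-m)))
        = fun x : ℝ => Real.log (1 + (x - t) ^ 2) * (pearsonC m * (1 + x ^ 2) ^ (-m))
          - Real.log (1 + t ^ 2) * (pearsonC m * (1 + x ^ 2) ^ (-m)) := by
      funext x; ring
    rw [hsplit, integral_sub (hA t) (hB t), integral_const_mul, hcg, mul_one, pearsonF]
  have hmain : Tendsto (fun t : ℝ => pearsonF m t - Real.log (1 + t ^ 2)) atTop (nhds 0) := by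
    have hdct : Tendsto (fun t : ℝ => ∫ x : ℝ,
        (Real.log (1 + (x - t) ^ 2) - Real.log (1 + t ^ 2))
          * (pearsonC m * (1 + x ^ 2) ^ (-m))) atTop (nhds (∫ _ : ℝ, (0:ℝ))) := by
      apply tendsto_integral_filter_of_dominated_convergence
        (bound := fun x : ℝ => Real.log (2 * (1 + x ^ 2)) * (pearsonC m * (1 + x ^ 2) ^ (-m)))
      · filter_upwards with t
        apply Measurable.aestronglyMeasurable
        exact ((Real.measurable_log.comp (by fun_prop)).sub measurable_const).mul (by fun_prop)
      · filter_upwards with t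
        filter_upwards with x
        have hcgpos : (0:ℝ) < pearsonC m * (1 + x ^ 2) ^ (-m) := by positivity
        rw [Real.norm_eq_abs, abs_mul, abs_of_pos hcgpos]
        exact mul_le_mul_of_nonneg_right (log_diff_bound x t) hcgpos.le
      · have h := (integrable_log_mul hm).const_mul (pearsonC m)
        simpa [mul_comm, mul_left_comm, mul_assoc] using h
      · filter_upwards with x
        have hratio : Tendsto (fun t : ℝ => (1 + (x - t) ^ 2) / (1 + t ^ 2)) atTop (nhds 1) := by
          have hc : ContinuousAt
              (fun u : ℝ => (u ^ 2 + (x * u - 1) ^ 2) / (u ^ 2 + 1)) 0 := by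
            apply ContinuousAt.div (by fun_prop) (by fun_prop)
            norm_num
          have h1 : Tendsto (fun u : ℝ => (u ^ 2 + (x * u - 1) ^ 2) / (u ^ 2 + 1))
              (nhds 0) (nhds 1) := by
            have ht := hc.tendsto
            norm_num at ht ⊢
            convert ht using 2
          have h2 := h1.comp tendsto_inv_atTop_zero
          apply h2.congr'
          filter_upwards [eventually_gt_atTop (0:ℝ)] with t ht
          have ht0 : t ≠ 0 := ht.ne'
          simp only [Function.comp_apply]
          field_simp
        have hlog : Tendsto (fun t : ℝ =>
            Real.log (1 + (x - t) ^ 2) - Real.log (1 + t ^ 2)) atTop (nhds 0) := by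
          have hcl := (Real.continuousAt_log (one_ne_zero)).tendsto.comp hratio
          rw [Real.log_one] at hcl
          apply hcl.congr
          intro t
          simp only [Function.comp_apply]
          rw [Real.log_div (by positivity) (by positivity)]
        simpa using hlog.mul_const (pearsonC m * (1 + x ^ 2) ^ (-m))
    have hfun : (fun t : ℝ => pearsonF m t - Real.log (1 + t ^ 2))
        = fun t : ℝ => ∫ x : ℝ, (Real.log (1 + (x - t) ^ 2) - Real.log (1 + t ^ 2))
            * (pearsonC m * (1 + x ^ 2) ^ (-m)) := funext heq
    rw [hfun]
    simpa using hdct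
  refine ⟨hmain, ?_⟩
  have h1 : Tendsto (fun t : ℝ => Real.exp (pearsonF m t - Real.log (1 + t ^ 2)))
      atTop (nhds 1) := by
    simpa [Function.comp_def] using (Real.continuous_exp.tendsto 0).comp hmain
  have h2 : Tendsto (fun t : ℝ => (1 + t ^ 2) / t ^ 2) atTop (nhds 1) := by
    have hp2 : Tendsto (fun t : ℝ => t ^ 2) atTop atTop :=
      tendsto_pow_atTop (two_ne_zero)
    have hinv : Tendsto (fun t : ℝ => (t ^ 2)⁻¹) atTop (nhds 0) :=
      tendsto_inv_atTop_zero.comp hp2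
    have h3 : Tendsto (fun t : ℝ => (t ^ 2)⁻¹ + 1) atTop (nhds 1) := by
      simpa using hinv.add (tendsto_const_nhds (x := (1:ℝ)))
    apply h3.congr'
    filter_upwards [eventually_gt_atTop (0:ℝ)] with t ht
    have ht0 : t ≠ 0 := ht.ne'
    field_simp
  have hmul := h1.mul h2
  rw [mul_one] at hmul
  apply hmul.congr'
  filter_upwards [eventually_gt_atTop (0:ℝ)] with t ht
  have ht1 : (0:ℝ) < 1 + t ^ 2 := by positivity
  rw [Real.exp_sub, Real.exp_log ht1]
  field_simp
end

section
/- Let m > 1/2 and define G_m(ε) = E[D(X,ε)] where D(x,t) = (x−t)/(1+(x−t)²) and X has the Pearson Type VII density c_m(1+x²)^{−m}. Then G_m(ε) = −((2m−1)/(2(m+1)))·ε + O(ε²) as ε → 0⁺. -/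
open MeasureTheory

/-- `G_m(ε) = E[D(X, ε)]` for `X` Pearson Type VII distributed. -/
noncomputable def pearsonG (m : ℝ) (ε : ℝ) : ℝ :=
  ∫ x : ℝ, (x - ε) / (1 + (x - ε) ^ 2) * (pearsonC m * (1 + x ^ 2) ^ (-m))

open Real Filter Topology Set

namespace PearsonAux

noncomputable def pJ (s : ℝ) : ℝ := ∫ x : ℝ, (1 + x ^ 2) ^ (-s)

lemma pJ_integrable {s : ℝ} (hs : 1/2 < s) :
    Integrable (fun x : ℝ => (1 + x ^ 2) ^ (-s)) := by
  have h := integrable_rpow_neg_one_add_norm_sq (E := ℝ) (μ := volume) (r := 2*s)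
    (by simpa using by linarith)
  have : -(2*s)/2 = -s := by ring
  simpa [Real.norm_eq_abs, sq_abs, this] using h

lemma pJ_pos {s : ℝ} (hs : 1/2 < s) : 0 < pJ s := by
  rw [pJ, integral_pos_iff_support_of_nonneg]
  · have : (Function.support fun x : ℝ => (1 + x ^ 2) ^ (-s)) = Set.univ := by
      ext x; simp [Function.mem_support]
      positivity
    simp [this]
  · intro x; positivity
  · exact pJ_integrable hs

lemma pJ_hasDeriv (s : ℝ) (x : ℝ) :
    HasDerivAt (fun x : ℝ => x * (1 + x ^ 2) ^ (-s))
      ((1 - 2*s) * (1 + x ^ 2) ^ (-s) + 2*s * (1 + x ^ 2) ^ (-(s+1))) x := by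
  have hA : (0:ℝ) < 1 + x ^ 2 := by positivity
  have h1 : HasDerivAt (fun x : ℝ => (1 + x ^ 2) ^ (-s))
      ((2*x) * (-s) * (1 + x ^ 2) ^ (-s - 1)) x := by
    have h0 : HasDerivAt (fun x : ℝ => 1 + x ^ 2) (2*x) x := by
      simpa using ((hasDerivAt_pow 2 x).const_add 1)
    have := h0.rpow_const (p := -s) (Or.inl hA.ne')
    convert this using 1
  have h := (hasDerivAt_id x).mul h1
  refine h.congr_deriv ?_
  have key := Real.rpow_add hA 1 (-s-1)
  rw [show (1:ℝ) + (-s-1) = -s by ring, Real.rpow_one] at key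
  have e2 : (1 + x ^ 2) ^ (-(s+1)) = (1 + x ^ 2) ^ (-s-1) := by ring_nf
  rw [e2, key]; simp only [id_eq]; ring

lemma pJ_tendsto {s : ℝ} (hs : 1/2 < s) :
    Tendsto (fun x : ℝ => x * (1 + x ^ 2) ^ (-s)) atTop (𝓝 0) := by
  have hlim : Tendsto (fun x : ℝ => x ^ (-(2*s-1))) atTop (𝓝 0) :=
    tendsto_rpow_neg_atTop (by linarith)
  refine squeeze_zero' ?_ ?_ hlim
  · filter_upwards [eventually_ge_atTop (0:ℝ)] with x hx
    positivity
  · filter_upwards [eventually_ge_atTop (1:ℝ)] with x hx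
    have hx0 : (0:ℝ) < x := by linarith
    have h1 : (1 + x ^ 2 : ℝ) ^ (-s) ≤ (x ^ 2 : ℝ) ^ (-s) := by
      apply Real.rpow_le_rpow_of_nonpos (by positivity) (by nlinarith) (by linarith)
    have h2 : (x ^ 2 : ℝ) ^ (-s) = x ^ (-(2*s)) := by
      rw [← Real.rpow_natCast x 2, ← Real.rpow_mul hx0.le]
      norm_num
    calc x * (1 + x ^ 2) ^ (-s) ≤ x * x ^ (-(2*s)) := by
          rw [← h2]; exact mul_le_mul_of_nonneg_left h1 hx0.le
      _ = x ^ (-(2*s-1)) := by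
          rw [← Real.rpow_one_add' hx0.le (by intro h; nlinarith)]
          ring_nf

lemma pJ_rec {s : ℝ} (hs : 1/2 < s) : pJ (s+1) = (2*s-1)/(2*s) * pJ s := by
  set g : ℝ → ℝ := fun x => (1 - 2*s) * (1 + x ^ 2) ^ (-s) + 2*s * (1 + x ^ 2) ^ (-(s+1)) with hg
  have hgi : Integrable g :=
    ((pJ_integrable hs).const_mul _).add ((pJ_integrable (by linarith)).const_mul _)
  have hIoi : ∫ x in Ioi (0:ℝ), g x = 0 := by
    have := integral_Ioi_of_hasDerivAt_of_tendsto' (f := fun x : ℝ => x * (1 + x ^ 2) ^ (-s))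
      (f' := g) (a := 0) (fun x _ => pJ_hasDeriv s x) hgi.integrableOn (pJ_tendsto hs)
    simpa using this
  have hIic : ∫ x in Iic (0:ℝ), g x = 0 := by
    have hcomp := integral_comp_neg_Iic (0:ℝ) g
    have heven : ∀ x : ℝ, g (-x) = g x := by intro x; simp [hg]
    rw [neg_zero] at hcomp
    simp_rw [heven] at hcomp
    rw [hcomp, hIoi]
  have htot : ∫ x : ℝ, g x = 0 := by
    rw [← intervalIntegral.integral_Iic_add_Ioi hgi.integrableOn hgi.integrableOn, hIic, hIoi,
      add_zero]
  have hsplit : ∫ x : ℝ, g x = (1 - 2*s) * pJ s + 2*s * pJ (s+1) := by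
    rw [hg]
    rw [integral_add ((pJ_integrable hs).const_mul _) ((pJ_integrable (by linarith)).const_mul _),
      integral_const_mul, integral_const_mul]
    rfl
  have h2s : (2*s) ≠ 0 := by positivity
  rw [htot] at hsplit
  field_simp
  linarith [hsplit]

lemma odd_int (m : ℝ) : ∫ x : ℝ, x / (1 + x ^ 2) * (1 + x ^ 2) ^ (-m) = 0 := by
  set f : ℝ → ℝ := fun x => x / (1 + x ^ 2) * (1 + x ^ 2) ^ (-m) with hf
  have hodd : ∀ x, f (-x) = -f x := by
    intro x; simp [hf, neg_div]
  have h := integral_neg_eq_self f (volume : Measure ℝ)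
  simp_rw [hodd, integral_neg] at h
  linarith

lemma I2_pointwise (m x : ℝ) :
    (1 - x ^ 2) / (1 + x ^ 2) ^ 2 * (1 + x ^ 2) ^ (-m) =
      2 * (1 + x ^ 2) ^ (-(m + 2)) - (1 + x ^ 2) ^ (-(m + 1)) := by
  have hA : (0:ℝ) < 1 + x ^ 2 := by positivity
  have e1 : (1 + x ^ 2) ^ (-(m + 1)) = (1 + x ^ 2) ^ (-m) / (1 + x ^ 2) := by
    rw [show -(m + 1) = -m + (-1) by ring, Real.rpow_add hA, Real.rpow_neg_one, div_eq_mul_inv]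
  have e2 : (1 + x ^ 2) ^ (-(m + 2)) = (1 + x ^ 2) ^ (-m) / (1 + x ^ 2) ^ 2 := by
    rw [show -(m + 2) = -m + (-2) by ring, Real.rpow_add hA]
    rw [show ((-2):ℝ) = -((2:ℕ):ℝ) by norm_num, Real.rpow_neg hA.le ((2:ℕ):ℝ),
      Real.rpow_natCast, div_eq_mul_inv]
  rw [e1, e2]
  field_simp
  ring

lemma integrable_bdd_mul {m : ℝ} (hm : 1/2 < m) (φ : ℝ → ℝ)
    (hφ : AEStronglyMeasurable φ volume) (K : ℝ) (hK : ∀ x, |φ x| ≤ K) :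
    Integrable (fun x : ℝ => φ x * (1 + x ^ 2) ^ (-m)) := by
  have hw : Integrable (fun x : ℝ => (1 + x ^ 2) ^ (-m)) := pJ_integrable hm
  refine ((hw.const_mul K).mono' (hφ.mul hw.1) ?_)
  filter_upwards with x
  rw [norm_mul]
  have : ‖(1 + x ^ 2 : ℝ) ^ (-m)‖ = (1 + x ^ 2) ^ (-m) := by
    rw [Real.norm_eq_abs, abs_of_pos (by positivity)]
  rw [this]
  exact mul_le_mul_of_nonneg_right (by simpa [Real.norm_eq_abs] using hK x) (by positivity)

lemma decomp (x ε : ℝ) :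
    (x - ε) / (1 + (x - ε) ^ 2) =
      x / (1 + x ^ 2) - ε * ((1 - x ^ 2) / (1 + x ^ 2) ^ 2)
        + ε ^ 2 * (x ^ 3 - 3 * x + ε * (1 - x ^ 2)) / ((1 + x ^ 2) ^ 2 * (1 + (x - ε) ^ 2)) := by
  have hA : (1 + x ^ 2 : ℝ) ≠ 0 := by positivity
  have hB : (1 + (x - ε) ^ 2 : ℝ) ≠ 0 := by positivity
  field_simp
  ring

lemma remainder_bound (x ε : ℝ) (hε0 : 0 ≤ ε) (hε1 : ε ≤ 1) :
    |ε ^ 2 * (x ^ 3 - 3 * x + ε * (1 - x ^ 2)) / ((1 + x ^ 2) ^ 2 * (1 + (x - ε) ^ 2))|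
      ≤ 5 * ε ^ 2 := by
  have hA : (0:ℝ) < 1 + x ^ 2 := by positivity
  have hB : (1:ℝ) ≤ 1 + (x - ε) ^ 2 := by nlinarith [sq_nonneg (x - ε)]
  have hden : (0:ℝ) < (1 + x ^ 2) ^ 2 * (1 + (x - ε) ^ 2) := by positivity
  rw [abs_div, div_le_iff₀ (by rwa [abs_of_pos hden])]
  rw [abs_of_pos hden, abs_mul, abs_of_nonneg (sq_nonneg ε)]
  have hnum : |x ^ 3 - 3 * x + ε * (1 - x ^ 2)| ≤ 5 * (1 + x ^ 2) ^ 2 := by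
    have t0 : |x ^ 3 - 3 * x + ε * (1 - x ^ 2)| ≤ |x| ^ 3 + 3 * |x| + ε * (1 + x ^ 2) := by
      calc |x ^ 3 - 3 * x + ε * (1 - x ^ 2)| ≤ |x ^ 3 - 3 * x| + |ε * (1 - x ^ 2)| := abs_add_le _ _
        _ ≤ (|x ^ 3| + |3 * x|) + ε * |1 - x ^ 2| := by
            gcongr
            · exact abs_sub _ _
            · rw [abs_mul, abs_of_nonneg hε0]
        _ ≤ |x| ^ 3 + 3 * |x| + ε * (1 + x ^ 2) := by
            have h1 : |x ^ 3| = |x| ^ 3 := by rw [abs_pow]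
            have h2 : |3 * x| = 3 * |x| := by rw [abs_mul]; norm_num
            have h3 : |1 - x ^ 2| ≤ 1 + x ^ 2 := by
              rw [abs_le]; constructor <;> nlinarith
            rw [h1, h2]; gcongr
    have t1 : |x| ^ 3 ≤ (1 + x ^ 2) ^ 2 := by
      nlinarith [sq_nonneg (|x| ^ 2 - |x|), sq_nonneg (|x| - 1), abs_nonneg x, sq_abs x]
    have t2 : |x| ≤ (1 + x ^ 2) ^ 2 := by
      nlinarith [sq_nonneg (|x| - 1), abs_nonneg x, sq_abs x, sq_nonneg x]
    have t3 : ε * (1 + x ^ 2) ≤ (1 + x ^ 2) ^ 2 := by nlinarith [sq_nonneg x]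
    linarith
  calc ε ^ 2 * |x ^ 3 - 3 * x + ε * (1 - x ^ 2)| ≤ ε ^ 2 * (5 * (1 + x ^ 2) ^ 2) := by gcongr
    _ ≤ 5 * ε ^ 2 * ((1 + x ^ 2) ^ 2 * (1 + (x - ε) ^ 2)) := by
        nlinarith [sq_nonneg ε, sq_nonneg x, mul_nonneg (sq_nonneg ε) (sq_nonneg (1 + x ^ 2))]

end PearsonAux

open PearsonAux in
theorem pearsonG_expansion (m : ℝ) (hm : 1 / 2 < m) :
    ∃ C > 0, ∃ ε₀ > 0, ∀ ε : ℝ, 0 < ε → ε < ε₀ →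
      |pearsonG m ε + (2 * m - 1) / (2 * (m + 1)) * ε| ≤ C * ε ^ 2 := by
  refine ⟨5, by norm_num, 1, one_pos, fun ε hε hε1 => ?_⟩
  have hm1 : (1:ℝ)/2 < m + 1 := by linarith
  have hm2 : (1:ℝ)/2 < m + 2 := by linarith
  have hJm : 0 < pJ m := pJ_pos hm
  have hcpos : 0 < pearsonC m := by
    rw [pearsonC]
    exact inv_pos.mpr hJm
  -- component functions
  set w : ℝ → ℝ := fun x => (1 + x ^ 2) ^ (-m) with hw
  set φ1 : ℝ → ℝ := fun x => x / (1 + x ^ 2) with hφ1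
  set φ2 : ℝ → ℝ := fun x => (1 - x ^ 2) / (1 + x ^ 2) ^ 2 with hφ2
  set φ3 : ℝ → ℝ := fun x =>
    ε ^ 2 * (x ^ 3 - 3 * x + ε * (1 - x ^ 2)) / ((1 + x ^ 2) ^ 2 * (1 + (x - ε) ^ 2)) with hφ3
  have hc1 : Continuous φ1 := continuous_id.div (by continuity) fun x => by positivity
  have hc2 : Continuous φ2 := (by continuity : Continuous fun x : ℝ => 1 - x ^ 2).div
    (by continuity) fun x => by positivity
  have hc3 : Continuous φ3 := (by continuity : Continuous fun x : ℝ =>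
      ε ^ 2 * (x ^ 3 - 3 * x + ε * (1 - x ^ 2))).div (by continuity) fun x => by positivity
  have hb1 : ∀ x, |φ1 x| ≤ 1 := by
    intro x
    rw [hφ1, abs_div, abs_of_pos (show (0:ℝ) < 1 + x ^ 2 by positivity), div_le_one (by positivity)]
    nlinarith [sq_nonneg (|x| - 1), sq_abs x]
  have hb2 : ∀ x, |φ2 x| ≤ 1 := by
    intro x
    rw [hφ2, abs_div, abs_of_pos (show (0:ℝ) < (1 + x ^ 2) ^ 2 by positivity),
      div_le_one (by positivity)]
    have : |1 - x ^ 2| ≤ 1 + x ^ 2 := by rw [abs_le]; constructor <;> nlinarith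
    nlinarith [sq_nonneg x]
  have hb3 : ∀ x, |φ3 x| ≤ 5 * ε ^ 2 := fun x => remainder_bound x ε hε.le hε1.le
  have hi1 : Integrable (fun x => φ1 x * w x) :=
    integrable_bdd_mul hm φ1 hc1.aestronglyMeasurable 1 hb1
  have hi2 : Integrable (fun x => φ2 x * w x) :=
    integrable_bdd_mul hm φ2 hc2.aestronglyMeasurable 1 hb2
  have hi3 : Integrable (fun x => φ3 x * w x) :=
    integrable_bdd_mul hm φ3 hc3.aestronglyMeasurable (5 * ε ^ 2) hb3
  -- value of the main integral
  have hG : pearsonG m ε = pearsonC m *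
      ((∫ x, φ1 x * w x) - ε * (∫ x, φ2 x * w x) + ∫ x, φ3 x * w x) := by
    rw [pearsonG]
    have hptw : ∀ x : ℝ, (x - ε) / (1 + (x - ε) ^ 2) * (pearsonC m * (1 + x ^ 2) ^ (-m)) =
        pearsonC m * (φ1 x * w x - ε * (φ2 x * w x) + φ3 x * w x) := by
      intro x
      rw [decomp x ε]
      simp only [hφ1, hφ2, hφ3, hw]
      ring
    simp_rw [hptw]
    have hi12 : Integrable (fun x => φ1 x * w x - ε * (φ2 x * w x)) := hi1.sub (hi2.const_mul ε)
    rw [integral_const_mul, integral_add hi12 hi3, integral_sub hi1 (hi2.const_mul ε),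
      integral_const_mul]
  have hI1 : (∫ x, φ1 x * w x) = 0 := odd_int m
  have hI2 : (∫ x, φ2 x * w x) = 2 * pJ (m + 2) - pJ (m + 1) := by
    have : ∀ x : ℝ, φ2 x * w x = 2 * (1 + x ^ 2) ^ (-(m + 2)) - (1 + x ^ 2) ^ (-(m + 1)) :=
      fun x => I2_pointwise m x
    simp_rw [this]
    rw [integral_sub ((pJ_integrable hm2).const_mul 2) (pJ_integrable hm1), integral_const_mul]
    rfl
  have hcI2 : pearsonC m * (2 * pJ (m + 2) - pJ (m + 1)) = (2 * m - 1) / (2 * (m + 1)) := by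
    have h1 : pJ (m + 1) = (2 * m - 1) / (2 * m) * pJ m := pJ_rec hm
    have h2 : pJ (m + 2) = (2 * (m + 1) - 1) / (2 * (m + 1)) * pJ (m + 1) := by
      have := pJ_rec (s := m + 1) hm1
      rwa [show m + 1 + 1 = m + 2 by ring] at this
    have hmpos : (0:ℝ) < m := by linarith
    have hm1pos : (0:ℝ) < m + 1 := by linarith
    rw [h2, h1, pearsonC]
    have : (∫ x : ℝ, (1 + x ^ 2) ^ (-m)) = pJ m := rfl
    rw [this]
    field_simp
    ring
  have hI3 : |∫ x, φ3 x * w x| ≤ 5 * ε ^ 2 * pJ m := by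
    have h1 : |∫ x, φ3 x * w x| ≤ ∫ x, |φ3 x * w x| := by
      simpa only [Real.norm_eq_abs] using
        norm_integral_le_integral_norm (μ := volume) (fun x => φ3 x * w x)
    have h2 : (∫ x, |φ3 x * w x|) ≤ ∫ x, 5 * ε ^ 2 * w x := by
      apply integral_mono hi3.abs ((pJ_integrable hm).const_mul _)
      intro x
      dsimp only
      have hwpos : 0 < w x := by rw [hw]; positivity
      rw [abs_mul, abs_of_pos hwpos]
      exact mul_le_mul_of_nonneg_right (hb3 x) hwpos.le
    have h3 : (∫ x, 5 * ε ^ 2 * w x) = 5 * ε ^ 2 * pJ m := by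
      rw [integral_const_mul]; rfl
    linarith
  have hkey : pearsonG m ε + (2 * m - 1) / (2 * (m + 1)) * ε =
      pearsonC m * ∫ x, φ3 x * w x := by
    rw [hG, hI1, hI2]
    have : pearsonC m * (0 - ε * (2 * pJ (m + 2) - pJ (m + 1)) + ∫ x, φ3 x * w x) =
        -ε * (pearsonC m * (2 * pJ (m + 2) - pJ (m + 1))) + pearsonC m * ∫ x, φ3 x * w x := by
      ring
    rw [this, hcI2]
    ring
  rw [hkey, abs_mul, abs_of_pos hcpos]
  have hc1' : pearsonC m * pJ m = 1 := by
    rw [pearsonC]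
    have : (∫ x : ℝ, (1 + x ^ 2) ^ (-m)) = pJ m := rfl
    rw [this, inv_mul_cancel₀ hJm.ne']
  calc pearsonC m * |∫ x, φ3 x * w x| ≤ pearsonC m * (5 * ε ^ 2 * pJ m) := by
        exact mul_le_mul_of_nonneg_left hI3 hcpos.le
    _ = 5 * ε ^ 2 * (pearsonC m * pJ m) := by ring
    _ = 5 * ε ^ 2 := by rw [hc1', mul_one]
end

section
/- Let m > 1/2 and let X be Pearson Type VII distributed with density c_m(1+x²)^{−m}. The Fisher information for the location parameter equals 4m² E[X²/(1+X²)²] = m(2m−1)/(m+1). -/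
open MeasureTheory Real Filter Topology

lemma pf_integrable (a : ℝ) (ha : 1 / 2 < a) :
    Integrable (fun x : ℝ => (1 + x ^ 2) ^ (-a)) := by
  have h := integrable_rpow_neg_one_add_norm_sq (E := ℝ) (μ := volume) (r := 2 * a)
    (by simp; linarith)
  have : (fun x : ℝ => ((1 : ℝ) + ‖x‖ ^ 2) ^ (-(2 * a) / 2)) =
      fun x : ℝ => (1 + x ^ 2) ^ (-a) := by
    funext x
    rw [Real.norm_eq_abs, sq_abs]
    ring_nf
  rwa [this] at h

lemma pf_sq_le (a : ℝ) (x : ℝ) :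
    x ^ 2 * (1 + x ^ 2) ^ (-(a + 1)) ≤ (1 + x ^ 2) ^ (-a) := by
  have h0 : (0 : ℝ) < 1 + x ^ 2 := by positivity
  have : x ^ 2 * (1 + x ^ 2) ^ (-(a + 1)) ≤ (1 + x ^ 2) * (1 + x ^ 2) ^ (-(a + 1)) := by
    apply mul_le_mul_of_nonneg_right (by nlinarith) (Real.rpow_nonneg h0.le _)
  refine this.trans_eq ?_
  rw [show -a = 1 + -(a + 1) by ring, Real.rpow_add h0, Real.rpow_one]

lemma pf_sq_integrable (a : ℝ) (ha : 1 / 2 < a) :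
    Integrable (fun x : ℝ => x ^ 2 * (1 + x ^ 2) ^ (-(a + 1))) := by
  refine (pf_integrable a ha).mono' ?_ (Filter.Eventually.of_forall fun x => ?_)
  · apply Measurable.aestronglyMeasurable
    fun_prop (disch := intro x; positivity)
  · rw [Real.norm_eq_abs, abs_of_nonneg (by positivity)]
    exact pf_sq_le a x

lemma pf_deriv (a : ℝ) (x : ℝ) :
    HasDerivAt (fun x : ℝ => x * (1 + x ^ 2) ^ (-a))
      ((1 + x ^ 2) ^ (-a) - 2 * a * (x ^ 2 * (1 + x ^ 2) ^ (-(a + 1)))) x := by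
  have h0 : (0 : ℝ) < 1 + x ^ 2 := by positivity
  have h1 : HasDerivAt (fun x : ℝ => 1 + x ^ 2) (2 * x) x := by
    simpa using ((hasDerivAt_pow 2 x).const_add 1)
  have h2 : HasDerivAt (fun x : ℝ => (1 + x ^ 2) ^ (-a))
      (2 * x * (-a) * (1 + x ^ 2) ^ (-a - 1)) x :=
    h1.rpow_const (Or.inl h0.ne')
  have h3 := (hasDerivAt_id x).mul h2
  simp only [Pi.mul_def, id_eq] at h3
  refine h3.congr_deriv ?_
  rw [show -a - 1 = -(a + 1) from by ring] at *
  ring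

lemma pf_tendsto_top (a : ℝ) (ha : 1 / 2 < a) :
    Tendsto (fun x : ℝ => x * (1 + x ^ 2) ^ (-a)) atTop (𝓝 0) := by
  have h1 : Tendsto (fun x : ℝ => x ^ (-(2 * a - 1))) atTop (𝓝 0) :=
    tendsto_rpow_neg_atTop (by linarith)
  refine tendsto_of_tendsto_of_tendsto_of_le_of_le' tendsto_const_nhds h1 ?_ ?_
  · filter_upwards [eventually_ge_atTop (1 : ℝ)] with x hx
    positivity
  · filter_upwards [eventually_ge_atTop (1 : ℝ)] with x hx
    have hx0 : (0 : ℝ) < x := by linarith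
    have h2 : (1 + x ^ 2) ^ (-a) ≤ (x ^ 2) ^ (-a) :=
      Real.rpow_le_rpow_of_nonpos (by positivity) (by nlinarith) (by linarith)
    have h3 : (x ^ 2 : ℝ) ^ (-a) = x ^ (2 * (-a)) := by
      rw [← Real.rpow_natCast x 2, ← Real.rpow_mul hx0.le]
      norm_num
    calc x * (1 + x ^ 2) ^ (-a) ≤ x * (x ^ 2) ^ (-a) :=
          mul_le_mul_of_nonneg_left h2 hx0.le
      _ = x ^ (-(2 * a - 1)) := by
          rw [h3]
          nth_rewrite 1 [← Real.rpow_one x]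
          rw [← Real.rpow_add hx0]
          congr 1
          ring

lemma pf_tendsto_bot (a : ℝ) (ha : 1 / 2 < a) :
    Tendsto (fun x : ℝ => x * (1 + x ^ 2) ^ (-a)) atBot (𝓝 0) := by
  have h := (pf_tendsto_top a ha).comp tendsto_neg_atBot_atTop
  have heq : (fun x : ℝ => x * (1 + x ^ 2) ^ (-a)) =
      fun x : ℝ => -((fun y : ℝ => y * (1 + y ^ 2) ^ (-a)) (-x)) := by
    funext x; simp
  rw [heq]
  simpa using h.neg

lemma pf_key (a : ℝ) (ha : 1 / 2 < a) :
    ∫ x : ℝ, x ^ 2 * (1 + x ^ 2) ^ (-(a + 1)) =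
      (∫ x : ℝ, (1 + x ^ 2) ^ (-a)) / (2 * a) := by
  have ha0 : a ≠ 0 := by linarith
  have hint : Integrable (fun x : ℝ =>
      (1 + x ^ 2) ^ (-a) - 2 * a * (x ^ 2 * (1 + x ^ 2) ^ (-(a + 1)))) :=
    (pf_integrable a ha).sub ((pf_sq_integrable a ha).const_mul (2 * a))
  have h0 : ∫ x : ℝ, ((1 + x ^ 2) ^ (-a) - 2 * a * (x ^ 2 * (1 + x ^ 2) ^ (-(a + 1)))) = 0 := by
    have := MeasureTheory.integral_of_hasDerivAt_of_tendsto (pf_deriv a) hint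
      (pf_tendsto_bot a ha) (pf_tendsto_top a ha)
    simpa using this
  rw [integral_sub (pf_integrable a ha) ((pf_sq_integrable a ha).const_mul (2 * a)),
    integral_const_mul] at h0
  rw [eq_div_iff (by positivity : (2 : ℝ) * a ≠ 0)]
  linarith

theorem pearson_fisher_information (m : ℝ) (hm : 1 / 2 < m) :
    4 * m ^ 2 *
        ((∫ x : ℝ, (1 + x ^ 2) ^ (-m))⁻¹ *
          ∫ x : ℝ, x ^ 2 / (1 + x ^ 2) ^ 2 * (1 + x ^ 2) ^ (-m)) =
      m * (2 * m - 1) / (m + 1) := by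
  have hm0 : m ≠ 0 := by linarith
  have hm1 : 1 / 2 < m + 1 := by linarith
  -- rewrite the integrand
  have heq : (fun x : ℝ => x ^ 2 / (1 + x ^ 2) ^ 2 * (1 + x ^ 2) ^ (-m)) =
      fun x : ℝ => x ^ 2 * (1 + x ^ 2) ^ (-(m + 1 + 1)) := by
    funext x
    have h0 : (0 : ℝ) < 1 + x ^ 2 := by positivity
    have h2 : (1 + x ^ 2) ^ (-(m + 1 + 1)) * (1 + x ^ 2) ^ (2 : ℕ) = (1 + x ^ 2) ^ (-m) := by
      rw [← Real.rpow_natCast (1 + x ^ 2) 2, ← Real.rpow_add h0]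
      congr 1
      push_cast
      ring
    rw [div_mul_eq_mul_div, div_eq_iff (by positivity), mul_assoc, h2]
  rw [heq, pf_key (m + 1) hm1]
  -- relate ∫ (1+x²)^(-(m+1)) to ∫ (1+x²)^(-m)
  have hsplit : (fun x : ℝ => x ^ 2 * (1 + x ^ 2) ^ (-(m + 1))) =
      fun x : ℝ => (1 + x ^ 2) ^ (-m) - (1 + x ^ 2) ^ (-(m + 1)) := by
    funext x
    have h0 : (0 : ℝ) < 1 + x ^ 2 := by positivity
    have : (1 + x ^ 2) ^ (-m) = (1 + x ^ 2) * (1 + x ^ 2) ^ (-(m + 1)) := by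
      rw [show -m = 1 + -(m + 1) by ring, Real.rpow_add h0, Real.rpow_one]
    rw [this]
    ring
  have hkeym := pf_key m hm
  rw [hsplit, integral_sub (pf_integrable m hm) (pf_integrable (m + 1) hm1)] at hkeym
  -- positivity of the main integral
  have hIpos : 0 < ∫ x : ℝ, (1 + x ^ 2) ^ (-m) := by
    rw [integral_pos_iff_support_of_nonneg_ae
      (Filter.Eventually.of_forall fun x => by positivity) (pf_integrable m hm)]
    have : Function.support (fun x : ℝ => (1 + x ^ 2) ^ (-m)) = Set.univ := by
      ext x
      simp only [Function.mem_support, Set.mem_univ, iff_true]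
      positivity
    rw [this]
    simp
  set I := ∫ x : ℝ, (1 + x ^ 2) ^ (-m) with hI
  set I1 := ∫ x : ℝ, (1 + x ^ 2) ^ (-(m + 1)) with hI1
  have hI1eq : I1 = I - I / (2 * m) := by linarith
  rw [hI1eq]
  field_simp
  ring
end
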